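/- Let U be a tree containing an edge uw with deg_U(w) ≥ 2, and let k ≥ 2 be an integer. Let T be the tree obtained from U by adding a new vertex v adjacent to u together with k new pendant vertices v₁, …, v_k adjacent to v. Let T' be the tree obtained from T by deleting the edges vv₁, …, vv_k and adding the edges wv₁, …, wv_k. Then S_i(T) = S_i(T') for i = 0, 1, 2, 3 and S_4(T) < S_4(T'); in particular T ≺_s T'. -/
import Mathlib


open SimpleGraph

open scoped Classical in
/-- The adjacency matrix of a simple graph, with real entries. -/
noncomputable def adjMat {V : Type*} [Fintype V] (G : SimpleGraph V) : Matrix V V ℝ :=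
  Matrix.of fun a b => if G.Adj a b then 1 else 0

/-- The `k`-th spectral moment `S_k(G) = tr(A(G)^k)`. -/
noncomputable def spectralMoment {V : Type*} [Fintype V] [DecidableEq V]
    (G : SimpleGraph V) (k : ℕ) : ℝ :=
  Matrix.trace (adjMat G ^ k)

/-- `SLt G₁ G₂` means `G₁ ≺_s G₂`: for some `k` with `1 ≤ k ≤ n - 1`,
`S_i(G₁) = S_i(G₂)` for all `i < k` and `S_k(G₁) < S_k(G₂)`. -/
def SLt {V : Type*} [Fintype V] [DecidableEq V] (G₁ G₂ : SimpleGraph V) : Prop :=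
  ∃ k : ℕ, 1 ≤ k ∧ k ≤ Fintype.card V - 1 ∧
    (∀ i < k, spectralMoment G₁ i = spectralMoment G₂ i) ∧
    spectralMoment G₁ k < spectralMoment G₂ k

open Finset
set_option linter.unusedSectionVars false

section Helpers
open scoped Classical
variable {V : Type*} [Fintype V] [DecidableEq V]

lemma adjMat_apply (G : SimpleGraph V) (a b : V) :
    adjMat G a b = if G.Adj a b then 1 else 0 := by
  simp [adjMat]

noncomputable def rdeg (G : SimpleGraph V) (a : V) : ℝ := ∑ b, adjMat G a b

lemma adjMat_symm (G : SimpleGraph V) (a b : V) : adjMat G a b = adjMat G b a := by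
  simp [adjMat_apply, G.adj_comm]

lemma adjMat_sq (G : SimpleGraph V) (a b : V) :
    adjMat G a b * adjMat G a b = adjMat G a b := by
  by_cases h : G.Adj a b <;> simp [adjMat_apply, h]

lemma sm4 (G : SimpleGraph V)
    (h : ∀ a b, a ≠ b → ∀ c c', G.Adj a c → G.Adj c b → G.Adj a c' → G.Adj c' b → c = c') :
    spectralMoment G 4 = 2 * (∑ a, (rdeg G a)^2) - ∑ a, rdeg G a := by
  set A := adjMat G with hA
  set f : V → V → ℝ := fun a b => ∑ c, A a c * A c b with hf
  have h4 : A ^ 4 = (A * A) * (A * A) := by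
    rw [pow_succ, pow_succ, pow_two, Matrix.mul_assoc]
  have hfsymm : ∀ a b, f a b = f b a := by
    intro a b
    refine Finset.sum_congr rfl fun c _ => ?_
    rw [hA, adjMat_symm G a c, adjMat_symm G c b]; ring
  have hdiag : ∀ a, f a a = rdeg G a := by
    intro a
    refine Finset.sum_congr rfl fun c _ => ?_
    rw [hA, adjMat_symm G c a, adjMat_sq]
  have hcard : ∀ a b, f a b =
      ((univ.filter (fun c => G.Adj a c ∧ G.Adj c b)).card : ℝ) := by
    intro a b
    rw [← Finset.sum_boole]
    refine Finset.sum_congr rfl fun c _ => ?_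
    rw [hA]
    by_cases h1 : G.Adj a c <;> by_cases h2 : G.Adj c b <;>
      simp [adjMat_apply, h1, h2]
  have h01 : ∀ a b, a ≠ b → f a b = 0 ∨ f a b = 1 := by
    intro a b hab
    rw [hcard]
    have hle : (univ.filter (fun c => G.Adj a c ∧ G.Adj c b)).card ≤ 1 := by
      refine Finset.card_le_one.mpr fun c hc c' hc' => ?_
      rw [Finset.mem_filter] at hc hc'
      exact h a b hab c c' hc.2.1 hc.2.2 hc'.2.1 hc'.2.2
    interval_cases hcc : (univ.filter (fun c => G.Adj a c ∧ G.Adj c b)).card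
    · left; simp [hcc]
    · right; simp [hcc]
  have htot : ∑ a, ∑ b, f a b = ∑ c, (rdeg G c)^2 := by
    have hcol : ∀ c, ∑ a, A a c = rdeg G c := by
      intro c
      refine Finset.sum_congr rfl fun a _ => adjMat_symm G a c
    calc ∑ a, ∑ b, f a b = ∑ a, ∑ c, A a c * rdeg G c := by
          refine Finset.sum_congr rfl fun a _ => ?_
          rw [Finset.sum_comm]
          exact Finset.sum_congr rfl fun c _ => by rw [← Finset.mul_sum]; rfl
      _ = ∑ c, (∑ a, A a c) * rdeg G c := by
          rw [Finset.sum_comm]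
          exact Finset.sum_congr rfl fun c _ => (Finset.sum_mul _ _ _).symm
      _ = ∑ c, (rdeg G c)^2 := by
          refine Finset.sum_congr rfl fun c _ => by rw [hcol, pow_two]
  have key : spectralMoment G 4 = ∑ a, ∑ b, f a b * f b a := by
    rw [spectralMoment, ← hA, h4]
    simp only [Matrix.trace, Matrix.diag, Matrix.mul_apply, hf]
  rw [key]
  have hrow : ∀ a, ∑ b, f a b * f b a = (rdeg G a)^2 + (∑ b, f a b - f a a) := by
    intro a
    rw [← Finset.add_sum_erase _ (fun b => f a b * f b a) (mem_univ a),
      ← Finset.sum_erase_eq_sub (mem_univ a)]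
    congr 1
    · rw [hdiag, pow_two]
    · refine Finset.sum_congr rfl fun b hb => ?_
      have hba : b ≠ a := (Finset.mem_erase.mp hb).1
      rw [hfsymm b a]
      rcases h01 a b (Ne.symm hba) with h0 | h0 <;> rw [h0] <;> ring
  rw [Finset.sum_congr rfl fun a _ => hrow a, Finset.sum_add_distrib,
    Finset.sum_sub_distrib, htot, Finset.sum_congr rfl fun a _ => hdiag a]
  ring

lemma acyclic_cn {G : SimpleGraph V} (hG : G.IsAcyclic) :
    ∀ a b, a ≠ b → ∀ c c', G.Adj a c → G.Adj c b → G.Adj a c' → G.Adj c' b → c = c' := by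
  intro a b hab c c' h1 h2 h3 h4
  have hp1 : (Walk.cons h1 (Walk.cons h2 Walk.nil) : G.Walk a b).IsPath := by
    simp [Walk.isPath_def, hab, h1.ne, h2.ne]
  have hp2 : (Walk.cons h3 (Walk.cons h4 Walk.nil) : G.Walk a b).IsPath := by
    simp [Walk.isPath_def, hab, h3.ne, h4.ne]
  have heq := isAcyclic_iff_path_unique.mp hG ⟨_, hp1⟩ ⟨_, hp2⟩
  have hs := congrArg (fun p : G.Path a b => (p : G.Walk a b).support) heq
  simpa using hs

lemma acyclic_tri {G : SimpleGraph V} (hG : G.IsAcyclic) :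
    ∀ a b c, G.Adj a b → G.Adj b c → G.Adj c a → False := by
  intro a b c h1 h2 h3
  have hp1 : (Walk.cons h3.symm Walk.nil : G.Walk a c).IsPath := by
    simp [Walk.isPath_def, h3.ne']
  have hp2 : (Walk.cons h1 (Walk.cons h2 Walk.nil) : G.Walk a c).IsPath := by
    simp [Walk.isPath_def, h1.ne, h2.ne, h3.ne']
  have heq := isAcyclic_iff_path_unique.mp hG ⟨_, hp1⟩ ⟨_, hp2⟩
  have hs := congrArg (fun p : G.Path a c => (p : G.Walk a c).support) heq
  simp at hs

lemma rdeg_eq_ncard (G : SimpleGraph V) (a : V) :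
    rdeg G a = ((G.neighborSet a).ncard : ℝ) := by
  have h : G.neighborSet a = ↑(univ.filter (G.Adj a ·)) := by
    ext b; simp [mem_neighborSet]
  rw [h, Set.ncard_coe_finset]
  simp [rdeg, adjMat_apply, Finset.sum_boole]


lemma sm0 (G : SimpleGraph V) : spectralMoment G 0 = (Fintype.card V : ℝ) := by
  simp [spectralMoment, Matrix.trace_one]


lemma sm1 (G : SimpleGraph V) : spectralMoment G 1 = 0 := by
  simp [spectralMoment, Matrix.trace, Matrix.diag, adjMat_apply]


lemma sm2 (G : SimpleGraph V) : spectralMoment G 2 = ∑ a, rdeg G a := by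
  simp only [spectralMoment, pow_two, Matrix.trace, Matrix.diag, Matrix.mul_apply, rdeg]
  refine Finset.sum_congr rfl fun a _ => Finset.sum_congr rfl fun b _ => ?_
  rw [← adjMat_symm, adjMat_sq]


lemma sm3 (G : SimpleGraph V)
    (h : ∀ a b c, G.Adj a b → G.Adj b c → G.Adj c a → False) :
    spectralMoment G 3 = 0 := by
  have h3 : (adjMat G) ^ 3 = adjMat G * adjMat G * adjMat G := by
    rw [pow_succ, pow_two]
  simp only [spectralMoment, h3, Matrix.trace, Matrix.diag, Matrix.mul_apply,
    Finset.sum_mul]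
  refine Finset.sum_eq_zero fun a _ => Finset.sum_eq_zero fun b _ => Finset.sum_eq_zero fun c _ => ?_
  by_cases h1 : G.Adj a c
  · by_cases h2 : G.Adj c b
    · by_cases h4 : G.Adj b a
      · exact (h a c b h1 h2 h4).elim
      · simp [adjMat_apply, h4]
    · simp [adjMat_apply, h2]
  · simp [adjMat_apply, h1]


end Helpers

/-- Operation II. Let `T` be a tree containing distinct vertices
`u, v, w` and a set `s` of `k ≥ 2` vertices such that: `uw` is an edge with
`deg(w) ≥ 2` in the underlying tree `U` (equivalently, in `T`, since `w` is adjacent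
to none of `v` and the vertices of `s`); `v` is adjacent to `u`; the neighbors of `v`
are exactly `{u} ∪ s`; and every vertex of `s` is a pendant vertex. If `T'` is obtained
from `T` by deleting the edges `vx` and adding the edges `wx` for all `x ∈ s`, then
`S_i(T) = S_i(T')` for `i = 0,1,2,3`, `S_4(T) < S_4(T')`, and `T ≺_s T'`. -/
theorem stmt_1 {V : Type*} [Fintype V] [DecidableEq V]
    (T : SimpleGraph V) (hT : T.IsTree)
    (u v w : V) (s : Finset V) (k : ℕ) (hk : 2 ≤ k) (hcards : s.card = k)
    (huv : u ≠ v) (hwv : w ≠ v) (hwu : w ≠ u)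
    (hus : u ∉ s) (hvs : v ∉ s) (hws : w ∉ s)
    (hadjuv : T.Adj u v) (hadjuw : T.Adj u w)
    (hNv : T.neighborSet v = {u} ∪ (s : Set V))
    (hleaf : ∀ x ∈ s, (T.neighborSet x).ncard = 1)
    (hdegw : 2 ≤ (T.neighborSet w).ncard)
    (T' : SimpleGraph V)
    (hT' : T' = SimpleGraph.fromEdgeSet
      ((T.edgeSet \ {e : Sym2 V | ∃ x ∈ s, e = s(v, x)}) ∪
        {e : Sym2 V | ∃ x ∈ s, e = s(w, x)})) :
    (∀ i < 4, spectralMoment T i = spectralMoment T' i) ∧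
    spectralMoment T 4 < spectralMoment T' 4 ∧ SLt T T' := by
  classical
  -- T adjacency facts
  have hTv : ∀ b, T.Adj v b ↔ b = u ∨ b ∈ s := by
    intro b
    rw [← SimpleGraph.mem_neighborSet, hNv]
    simp
  have hTs : ∀ x ∈ s, ∀ b, T.Adj x b ↔ b = v := by
    intro x hx b
    have hvx : T.Adj v x := (hTv x).mpr (Or.inr hx)
    obtain ⟨a, ha⟩ := Set.ncard_eq_one.mp (hleaf x hx)
    have hv : v ∈ T.neighborSet x := by
      rw [SimpleGraph.mem_neighborSet]; exact hvx.symm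
    rw [ha, Set.mem_singleton_iff] at hv
    have hNx : T.neighborSet x = {v} := by rw [ha, ← hv]
    rw [← SimpleGraph.mem_neighborSet, hNx, Set.mem_singleton_iff]
  have hTws : ∀ b ∈ s, ¬ T.Adj w b := by
    intro b hb hadj
    exact hwv ((hTs b hb w).mp hadj.symm)
  -- T' adjacency characterization
  have hsym : ∀ (z a b : V), (∃ x ∈ s, s(a,b) = s(z,x)) ↔
      ((a = z ∧ b ∈ s) ∨ (b = z ∧ a ∈ s)) := by
    intro z a b
    constructor
    · rintro ⟨x, hx, heq⟩
      rw [Sym2.eq_iff] at heq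
      rcases heq with ⟨h1, h2⟩ | ⟨h1, h2⟩
      · exact Or.inl ⟨h1, by rw [h2]; exact hx⟩
      · exact Or.inr ⟨h2, by rw [h1]; exact hx⟩
    · rintro (⟨rfl, hb⟩ | ⟨rfl, ha⟩)
      · exact ⟨b, hb, rfl⟩
      · exact ⟨a, ha, by rw [Sym2.eq_swap]⟩
  have hadj' : ∀ a b, T'.Adj a b ↔
      ((T.Adj a b ∧ ¬ ∃ x ∈ s, s(a,b) = s(v,x)) ∨ ∃ x ∈ s, s(a,b) = s(w,x)) := by
    intro a b
    rw [hT', SimpleGraph.fromEdgeSet_adj]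
    simp only [Set.mem_union, Set.mem_diff, Set.mem_setOf_eq, SimpleGraph.mem_edgeSet]
    constructor
    · rintro ⟨h, -⟩; exact h
    · intro h
      refine ⟨h, ?_⟩
      rcases h with ⟨h, -⟩ | hex
      · exact h.ne
      · rw [hsym w a b] at hex
        rcases hex with ⟨rfl, hb⟩ | ⟨rfl, ha⟩
        · exact fun hab => hws (hab ▸ hb)
        · exact fun hab => hws (hab ▸ ha)
  have hadj2 : ∀ a b, T'.Adj a b ↔
      ((T.Adj a b ∧ ¬((a = v ∧ b ∈ s) ∨ (b = v ∧ a ∈ s))) ∨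
        ((a = w ∧ b ∈ s) ∨ (b = w ∧ a ∈ s))) := by
    intro a b
    rw [hadj' a b, hsym v a b, hsym w a b]
  have hA'v : ∀ b, T'.Adj v b ↔ b = u := by
    intro b
    rw [hadj2]
    constructor
    · rintro (⟨hadj, hno⟩ | h)
      · rcases (hTv b).mp hadj with h | h
        · exact h
        · exact absurd (Or.inl ⟨rfl, h⟩) hno
      · rcases h with ⟨hvw, _⟩ | ⟨_, hvs'⟩
        · exact absurd hvw.symm hwv
        · exact absurd hvs' hvs
    · intro hb
      refine Or.inl ⟨?_, ?_⟩
      · rw [hb]; exact (hTv u).mpr (Or.inl rfl)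
      · rintro (⟨_, hu⟩ | ⟨_, hvs'⟩)
        · rw [hb] at hu; exact hus hu
        · exact hvs hvs'
  have hA's : ∀ x ∈ s, ∀ b, T'.Adj x b ↔ b = w := by
    intro x hx b
    rw [hadj2]
    constructor
    · rintro (⟨hadj, hno⟩ | h)
      · exact absurd (Or.inr ⟨(hTs x hx b).mp hadj, hx⟩) hno
      · rcases h with ⟨hxw, _⟩ | ⟨hbw, _⟩
        · exact absurd (hxw ▸ hx) hws
        · exact hbw
    · rintro rfl
      exact Or.inr (Or.inr ⟨rfl, hx⟩)
  have hA'w : ∀ b, T'.Adj w b ↔ (T.Adj w b ∨ b ∈ s) := by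
    intro b
    rw [hadj2]
    constructor
    · rintro (⟨hadj, _⟩ | h)
      · exact Or.inl hadj
      · rcases h with ⟨_, hbs⟩ | ⟨_, hws'⟩
        · exact Or.inr hbs
        · exact absurd hws' hws
    · rintro (hadj | hbs)
      · refine Or.inl ⟨hadj, ?_⟩
        rintro (⟨hwv', _⟩ | ⟨_, hws'⟩)
        · exact hwv hwv'
        · exact hws hws'
      · exact Or.inr (Or.inl ⟨rfl, hbs⟩)
  have hA'o : ∀ a, a ≠ v → a ∉ s → a ≠ w → ∀ b, T'.Adj a b ↔ T.Adj a b := by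
    intro a hav has haw b
    rw [hadj2]
    constructor
    · rintro (⟨hadj, _⟩ | h)
      · exact hadj
      · rcases h with ⟨haw', _⟩ | ⟨_, has'⟩
        · exact absurd haw' haw
        · exact absurd has' has
    · intro hadj
      refine Or.inl ⟨hadj, ?_⟩
      rintro (⟨hav', _⟩ | ⟨_, has'⟩)
      · exact hav hav'
      · exact has has'
  -- degree computations
  have hrv' : rdeg T' v = 1 := by
    have : ∀ b, adjMat T' v b = if b = u then (1:ℝ) else 0 := by
      intro b; rw [adjMat_apply]; simp [hA'v b]
    rw [rdeg, Finset.sum_congr rfl fun b _ => this b]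
    simp
  have hrv : rdeg T v = k + 1 := by
    have : ∀ b, adjMat T v b = if b = u ∨ b ∈ s then (1:ℝ) else 0 := by
      intro b; rw [adjMat_apply]; simp [hTv b]
    rw [rdeg, Finset.sum_congr rfl fun b _ => this b, Finset.sum_boole]
    have hfil : Finset.univ.filter (fun b => b = u ∨ b ∈ s) = insert u s := by
      ext b; simp [Finset.mem_insert]
    rw [hfil, Finset.card_insert_of_notMem hus, hcards]
    push_cast; ring
  have hrw' : rdeg T' w = rdeg T w + k := by
    have hterm : ∀ b, adjMat T' w b =
        adjMat T w b + (if b ∈ s then (1:ℝ) else 0) := by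
      intro b
      rw [adjMat_apply, adjMat_apply]
      by_cases h1 : T.Adj w b
      · have h2 : b ∉ s := fun hb => hTws b hb h1
        simp [hA'w b, h1, h2]
      · by_cases h2 : b ∈ s <;> simp [hA'w b, h1, h2]
    rw [rdeg, Finset.sum_congr rfl fun b _ => hterm b, Finset.sum_add_distrib,
      Finset.sum_boole]
    have hfil : Finset.univ.filter (fun b => b ∈ s) = s := by
      ext b; simp
    rw [hfil, hcards]
    rfl
  have hrs : ∀ x ∈ s, rdeg T x = 1 := by
    intro x hx
    have : ∀ b, adjMat T x b = if b = v then (1:ℝ) else 0 := by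
      intro b; rw [adjMat_apply]; simp [hTs x hx b]
    rw [rdeg, Finset.sum_congr rfl fun b _ => this b]
    simp
  have hrs' : ∀ x ∈ s, rdeg T' x = 1 := by
    intro x hx
    have : ∀ b, adjMat T' x b = if b = w then (1:ℝ) else 0 := by
      intro b; rw [adjMat_apply]; simp [hA's x hx b]
    rw [rdeg, Finset.sum_congr rfl fun b _ => this b]
    simp
  have hro : ∀ a, a ≠ v → a ≠ w → rdeg T' a = rdeg T a := by
    intro a hav haw
    by_cases has : a ∈ s
    · rw [hrs' a has, hrs a has]
    · refine Finset.sum_congr rfl fun b _ => ?_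
      rw [adjMat_apply, adjMat_apply]
      simp [hA'o a hav has haw b]
  -- sum splitting
  have hwmem : w ∈ Finset.univ.erase v := Finset.mem_erase.mpr ⟨hwv, Finset.mem_univ w⟩
  have hsplit : ∀ F : V → ℝ, ∑ a, F a =
      F v + F w + ∑ a ∈ (Finset.univ.erase v).erase w, F a := by
    intro F
    rw [← Finset.add_sum_erase _ F (Finset.mem_univ v),
      ← Finset.add_sum_erase _ F hwmem]
    ring
  have hsame : ∀ a ∈ (Finset.univ.erase v).erase w, rdeg T' a = rdeg T a := by
    intro a ha
    have h1 := Finset.mem_erase.mp ha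
    have h2 := Finset.mem_erase.mp h1.2
    exact hro a h2.1 h1.1
  have hS2 : ∑ a, rdeg T a = ∑ a, rdeg T' a := by
    rw [hsplit (rdeg T), hsplit (rdeg T'),
      Finset.sum_congr rfl hsame, hrv, hrv', hrw']
    ring
  have hd2 : (2:ℝ) ≤ rdeg T w := by
    rw [rdeg_eq_ncard]; exact_mod_cast hdegw
  have hk2 : (2:ℝ) ≤ (k:ℝ) := by exact_mod_cast hk
  have hS4sum : ∑ a, (rdeg T a)^2 < ∑ a, (rdeg T' a)^2 := by
    rw [hsplit (fun a => (rdeg T a)^2), hsplit (fun a => (rdeg T' a)^2)]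
    have hcong : ∑ a ∈ (Finset.univ.erase v).erase w, (rdeg T' a)^2
        = ∑ a ∈ (Finset.univ.erase v).erase w, (rdeg T a)^2 := by
      refine Finset.sum_congr rfl fun a ha => ?_
      rw [hsame a ha]
    rw [hcong, hrv, hrv', hrw']
    have h0 : (0:ℝ) < k := by linarith
    nlinarith [mul_le_mul hk2 hd2 (by norm_num : (0:ℝ) ≤ 2) (by linarith)]
  -- structural facts for T'
  have h2nb : ∀ z p q, T'.Adj z p → T'.Adj z q → p ≠ q → z ≠ v ∧ z ∉ s := by
    intro z p q h1 h2 hpq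
    constructor
    · rintro rfl
      exact hpq (((hA'v p).mp h1).trans ((hA'v q).mp h2).symm)
    · intro hz
      exact hpq (((hA's z hz p).mp h1).trans ((hA's z hz q).mp h2).symm)
  have hedge : ∀ a b, T'.Adj a b → a ≠ v → a ∉ s → b ≠ v → b ∉ s → T.Adj a b := by
    intro a b h hav has hbv hbs
    rw [hadj2] at h
    rcases h with ⟨h, _⟩ | (⟨_, hbs'⟩ | ⟨_, has'⟩)
    · exact h
    · exact absurd hbs' hbs
    · exact absurd has' has
  have htri' : ∀ a b c, T'.Adj a b → T'.Adj b c → T'.Adj c a → False := by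
    intro a b c h1 h2 h3
    have hna := h2nb a b c h1 h3.symm h2.ne
    have hnb := h2nb b c a h2 h1.symm h3.ne
    have hnc := h2nb c a b h3 h2.symm h1.ne
    exact acyclic_tri hT.2 a b c (hedge a b h1 hna.1 hna.2 hnb.1 hnb.2)
      (hedge b c h2 hnb.1 hnb.2 hnc.1 hnc.2) (hedge c a h3 hnc.1 hnc.2 hna.1 hna.2)
  have hcn' : ∀ a b, a ≠ b → ∀ c c', T'.Adj a c → T'.Adj c b → T'.Adj a c' →
      T'.Adj c' b → c = c' := by
    intro a b hab c c' h1 h2 h3 h4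
    by_contra hne
    have hna := h2nb a c c' h1 h3 hne
    have hnb := h2nb b c c' h2.symm h4.symm hne
    have hnc := h2nb c a b h1.symm h2 hab
    have hnc' := h2nb c' a b h3.symm h4 hab
    exact hne (acyclic_cn hT.2 a b hab c c'
      (hedge a c h1 hna.1 hna.2 hnc.1 hnc.2)
      (hedge c b h2 hnc.1 hnc.2 hnb.1 hnb.2)
      (hedge a c' h3 hna.1 hna.2 hnc'.1 hnc'.2)
      (hedge c' b h4 hnc'.1 hnc'.2 hnb.1 hnb.2))
  -- vertex count
  have hcard5 : 5 ≤ Fintype.card V := by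
    have hvm : v ∉ insert w s := by
      simp only [Finset.mem_insert]
      rintro (h | h)
      · exact hwv h.symm
      · exact hvs h
    have hum : u ∉ insert v (insert w s) := by
      simp only [Finset.mem_insert]
      rintro (h | h | h)
      · exact huv h
      · exact hwu h.symm
      · exact hus h
    have hc : (insert u (insert v (insert w s))).card = k + 3 := by
      rw [Finset.card_insert_of_notMem hum, Finset.card_insert_of_notMem hvm,
        Finset.card_insert_of_notMem hws, hcards]
    calc 5 ≤ k + 3 := by omega
      _ = (insert u (insert v (insert w s))).card := hc.symm
      _ ≤ Finset.univ.card := Finset.card_le_card (Finset.subset_univ _)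
      _ = Fintype.card V := Finset.card_univ
  -- assemble
  have heq4 : ∀ i < 4, spectralMoment T i = spectralMoment T' i := by
    intro i hi
    interval_cases i
    · rw [sm0, sm0]
    · rw [sm1, sm1]
    · rw [sm2, sm2, hS2]
    · rw [sm3 T (acyclic_tri hT.2), sm3 T' htri']
  have hlt4 : spectralMoment T 4 < spectralMoment T' 4 := by
    rw [sm4 T (acyclic_cn hT.2), sm4 T' hcn', ← hS2]
    linarith [hS4sum]
  exact ⟨heq4, hlt4, 4, by norm_num, by omega, heq4, hlt4⟩
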